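/- Let A₁,...,A_N, B₁,...,B_N be bounded operators on a Hilbert space H and X a Hilbert–Schmidt operator. Then ‖Σ_{n=1}^N AₙXBₙ‖₂ ≤ ‖(Σ_{n=1}^N Aₙ*Aₙ)^{1/2} X‖₂ · ‖Σ_{n=1}^N Bₙ*Bₙ‖^{1/2}. -/

import Mathlib

open ContinuousLinearMap
open scoped ENNReal NNReal

/-- The Hilbert–Schmidt norm of a bounded operator, with respect to a Hilbert basis `e`
(valued in `ℝ≥0∞`). -/
noncomputable def hsNorm {H : Type*} [NormedAddCommGroup H] [InnerProductSpace ℂ H]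
    {ι : Type*} (e : HilbertBasis ι ℂ H) (X : H →L[ℂ] H) : ℝ≥0∞ :=
  (∑' i, (‖X (e i)‖₊ : ℝ≥0∞) ^ 2) ^ ((1 : ℝ) / 2)

/-!
Put `Y = ∑ Aₙ X Bₙ`, so that `Y* = ∑ Bₙ* (Aₙ X)*`. Since `‖Y‖₂ = ‖Y*‖₂`, it suffices to bound
`‖Y* y‖` for each vector `y` of a Hilbert basis. For any vectors `vₙ`, with `w = ∑ Bₙ* vₙ`,
Cauchy–Schwarz gives `‖w‖² = ∑ re ⟪Bₙ w, vₙ⟫ ≤ (∑ ‖Bₙ w‖²)^{1/2} (∑ ‖vₙ‖²)^{1/2}` and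
`∑ ‖Bₙ w‖² = re ⟪w, (∑ Bₙ* Bₙ) w⟫ ≤ ‖∑ Bₙ* Bₙ‖ ‖w‖²`, hence `‖w‖² ≤ ‖∑ Bₙ* Bₙ‖ ∑ ‖vₙ‖²`.
Taking `vₙ = (Aₙ X)* y` and summing over the basis yields
`‖Y‖₂² ≤ ‖∑ Bₙ* Bₙ‖ ∑ ‖Aₙ X‖₂²`. Finally `∑ ‖Aₙ X‖₂² = ‖(∑ Aₙ* Aₙ)^{1/2} X‖₂²`, because
`‖(∑ Aₙ* Aₙ)^{1/2} x‖² = ⟪x, (∑ Aₙ* Aₙ) x⟫ = ∑ ‖Aₙ x‖²` for every `x`.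
-/

open scoped InnerProductSpace

namespace HilbertBasis

variable {𝕜 E F ι ι' : Type*} [RCLike 𝕜] [NormedAddCommGroup E] [InnerProductSpace 𝕜 E]
  [NormedAddCommGroup F] [InnerProductSpace 𝕜 F]

theorem hasSum_norm_inner_sq (b : HilbertBasis ι 𝕜 E) (x : E) :
    HasSum (fun i => ‖⟪b i, x⟫_𝕜‖ ^ 2) (‖x‖ ^ 2) := by
  simpa [b.repr_apply_apply] using lp.hasSum_norm (p := 2) (by norm_num) (b.repr x)

theorem tsum_enorm_inner_sq (b : HilbertBasis ι 𝕜 E) (x : E) :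
    ∑' i, ‖⟪b i, x⟫_𝕜‖ₑ ^ 2 = ‖x‖ₑ ^ 2 := by
  simp only [← ofReal_norm, ← ENNReal.ofReal_pow (norm_nonneg _)]
  rw [← ENNReal.ofReal_tsum_of_nonneg (fun _ => by positivity)
    (b.hasSum_norm_inner_sq x).summable, (b.hasSum_norm_inner_sq x).tsum_eq]

theorem tsum_enorm_adjoint_apply_sq [CompleteSpace E] [CompleteSpace F]
    (b : HilbertBasis ι 𝕜 E) (c : HilbertBasis ι' 𝕜 F) (M : E →L[𝕜] F) :
    ∑' j, ‖adjoint M (c j)‖ₑ ^ 2 = ∑' i, ‖M (b i)‖ₑ ^ 2 := by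
  calc ∑' j, ‖adjoint M (c j)‖ₑ ^ 2 = ∑' j, ∑' i, ‖⟪b i, adjoint M (c j)⟫_𝕜‖ₑ ^ 2 := by
        simp_rw [b.tsum_enorm_inner_sq]
    _ = ∑' i, ∑' j, ‖⟪c j, M (b i)⟫_𝕜‖ₑ ^ 2 := by
        rw [ENNReal.tsum_comm]
        simp_rw [adjoint_inner_right, ← inner_conj_symm (c _), RCLike.enorm_conj]
    _ = ∑' i, ‖M (b i)‖ₑ ^ 2 := by simp_rw [c.tsum_enorm_inner_sq]

end HilbertBasis

namespace ContinuousLinearMap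

section RCLike

variable {𝕜 E F G ι ι' ι'' κ : Type*} [RCLike 𝕜]
  [NormedAddCommGroup E] [InnerProductSpace 𝕜 E] [CompleteSpace E]
  [NormedAddCommGroup F] [InnerProductSpace 𝕜 F] [CompleteSpace F]
  [NormedAddCommGroup G] [InnerProductSpace 𝕜 G] [CompleteSpace G]

theorem sum_norm_apply_sq_eq_re_inner (s : Finset κ) (B : κ → E →L[𝕜] F) (x : E) :
    ∑ n ∈ s, ‖B n x‖ ^ 2 = RCLike.re ⟪x, (∑ n ∈ s, adjoint (B n) ∘L B n) x⟫_𝕜 := by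
  simp only [sum_apply, inner_sum, map_sum, apply_norm_sq_eq_inner_adjoint_right]

theorem sum_norm_apply_sq_le (s : Finset κ) (B : κ → E →L[𝕜] F) (x : E) :
    ∑ n ∈ s, ‖B n x‖ ^ 2 ≤ ‖∑ n ∈ s, adjoint (B n) ∘L B n‖ * ‖x‖ ^ 2 := by
  set T := ∑ n ∈ s, adjoint (B n) ∘L B n
  calc ∑ n ∈ s, ‖B n x‖ ^ 2 = RCLike.re ⟪x, T x⟫_𝕜 := sum_norm_apply_sq_eq_re_inner s B x
    _ ≤ ‖x‖ * ‖T x‖ := re_inner_le_norm _ _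
    _ ≤ ‖x‖ * (‖T‖ * ‖x‖) := by gcongr; exact T.le_opNorm x
    _ = ‖T‖ * ‖x‖ ^ 2 := by ring

theorem norm_sum_adjoint_apply_sq_le (s : Finset κ) (B : κ → E →L[𝕜] F) (v : κ → F) :
    ‖∑ n ∈ s, adjoint (B n) (v n)‖ ^ 2 ≤
      ‖∑ n ∈ s, adjoint (B n) ∘L B n‖ * ∑ n ∈ s, ‖v n‖ ^ 2 := by
  set w := ∑ n ∈ s, adjoint (B n) (v n)
  set T := ∑ n ∈ s, adjoint (B n) ∘L B n
  have hw : ‖w‖ ^ 2 ≤ ∑ n ∈ s, ‖B n w‖ * ‖v n‖ := by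
    calc ‖w‖ ^ 2 = RCLike.re ⟪w, ∑ n ∈ s, adjoint (B n) (v n)⟫_𝕜 :=
          (inner_self_eq_norm_sq w).symm
      _ = ∑ n ∈ s, RCLike.re ⟪B n w, v n⟫_𝕜 := by
          simp only [inner_sum, adjoint_inner_right, map_sum]
      _ ≤ ∑ n ∈ s, ‖B n w‖ * ‖v n‖ := by gcongr; exact re_inner_le_norm _ _
  rcases (sq_nonneg ‖w‖).eq_or_lt with hw0 | hw0
  · rw [← hw0]; positivity
  refine le_of_mul_le_mul_left ?_ hw0
  calc ‖w‖ ^ 2 * ‖w‖ ^ 2 ≤ (∑ n ∈ s, ‖B n w‖ * ‖v n‖) ^ 2 := by rw [← sq]; gcongr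
    _ ≤ (∑ n ∈ s, ‖B n w‖ ^ 2) * ∑ n ∈ s, ‖v n‖ ^ 2 := Finset.sum_mul_sq_le_sq_mul_sq _ _ _
    _ ≤ (‖T‖ * ‖w‖ ^ 2) * ∑ n ∈ s, ‖v n‖ ^ 2 := by gcongr; exact sum_norm_apply_sq_le s B w
    _ = ‖w‖ ^ 2 * (‖T‖ * ∑ n ∈ s, ‖v n‖ ^ 2) := by ring

theorem enorm_sum_adjoint_apply_sq_le (s : Finset κ) (B : κ → E →L[𝕜] F) (v : κ → F) :
    ‖∑ n ∈ s, adjoint (B n) (v n)‖ₑ ^ 2 ≤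
      ENNReal.ofReal ‖∑ n ∈ s, adjoint (B n) ∘L B n‖ * ∑ n ∈ s, ‖v n‖ₑ ^ 2 := by
  simp only [← ofReal_norm, ← ENNReal.ofReal_pow (norm_nonneg _)]
  rw [← ENNReal.ofReal_sum_of_nonneg fun _ _ => by positivity,
    ← ENNReal.ofReal_mul (norm_nonneg _)]
  exact ENNReal.ofReal_le_ofReal (norm_sum_adjoint_apply_sq_le s B v)

theorem tsum_enorm_sum_comp_apply_sq_le (b : HilbertBasis ι 𝕜 E) (c : HilbertBasis ι' 𝕜 F)
    (d : HilbertBasis ι'' 𝕜 G) (s : Finset κ) (C : κ → F →L[𝕜] G) (B : κ → E →L[𝕜] F) :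
    ∑' i, ‖(∑ n ∈ s, C n ∘L B n) (b i)‖ₑ ^ 2 ≤
      (∑ n ∈ s, ∑' j, ‖C n (c j)‖ₑ ^ 2) * ENNReal.ofReal ‖∑ n ∈ s, adjoint (B n) ∘L B n‖ := by
  calc ∑' i, ‖(∑ n ∈ s, C n ∘L B n) (b i)‖ₑ ^ 2
      = ∑' k, ‖∑ n ∈ s, adjoint (B n) (adjoint (C n) (d k))‖ₑ ^ 2 := by
        rw [← b.tsum_enorm_adjoint_apply_sq d]
        simp only [map_sum, adjoint_comp, sum_apply, comp_apply]
    _ ≤ ∑' k, ENNReal.ofReal ‖∑ n ∈ s, adjoint (B n) ∘L B n‖ *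
          ∑ n ∈ s, ‖adjoint (C n) (d k)‖ₑ ^ 2 :=
        ENNReal.tsum_le_tsum fun k => enorm_sum_adjoint_apply_sq_le s B _
    _ = (∑ n ∈ s, ∑' j, ‖C n (c j)‖ₑ ^ 2) * ENNReal.ofReal ‖∑ n ∈ s, adjoint (B n) ∘L B n‖ := by
        rw [ENNReal.tsum_mul_left, mul_comm, Summable.tsum_finsetSum fun _ _ => ENNReal.summable]
        simp_rw [c.tsum_enorm_adjoint_apply_sq d]

end RCLike

section Complex

variable {H ι κ : Type*} [NormedAddCommGroup H] [InnerProductSpace ℂ H] [CompleteSpace H]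

theorem norm_cfc_sqrt_apply_sq {P : H →L[ℂ] H} (hP : 0 ≤ P) (x : H) :
    ‖cfc Real.sqrt P x‖ ^ 2 = RCLike.re ⟪x, P x⟫_ℂ := by
  have hS : IsSelfAdjoint (cfc Real.sqrt P) := cfc_predicate _ _
  have hSS : cfc Real.sqrt P * cfc Real.sqrt P = P := by
    rw [← cfc_mul ..]
    conv_rhs => rw [← cfc_id' ℝ P]
    exact cfc_congr fun t ht => Real.mul_self_sqrt (spectrum_nonneg_of_nonneg hP ht)
  rw [apply_norm_sq_eq_inner_adjoint_right, hS.adjoint_eq]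
  exact congrArg (fun T : H →L[ℂ] H => RCLike.re ⟪x, T x⟫_ℂ) hSS

theorem norm_cfc_sqrt_sum_adjoint_comp_apply_sq (s : Finset κ) (A : κ → H →L[ℂ] H) (x : H) :
    ‖cfc Real.sqrt (∑ n ∈ s, adjoint (A n) ∘L A n) x‖ ^ 2 = ∑ n ∈ s, ‖A n x‖ ^ 2 := by
  have hP : 0 ≤ ∑ n ∈ s, adjoint (A n) ∘L A n :=
    Finset.sum_nonneg fun n _ => star_mul_self_nonneg (A n)
  rw [norm_cfc_sqrt_apply_sq hP, sum_norm_apply_sq_eq_re_inner]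

theorem tsum_enorm_cfc_sqrt_sum_adjoint_comp_comp_apply_sq (b : HilbertBasis ι ℂ H)
    (s : Finset κ) (A : κ → H →L[ℂ] H) (X : H →L[ℂ] H) :
    ∑' i, ‖(cfc Real.sqrt (∑ n ∈ s, adjoint (A n) ∘L A n) ∘L X) (b i)‖ₑ ^ 2 =
      ∑ n ∈ s, ∑' i, ‖(A n ∘L X) (b i)‖ₑ ^ 2 := by
  rw [← Summable.tsum_finsetSum fun _ _ => ENNReal.summable]
  refine tsum_congr fun i => ?_
  simp only [comp_apply, ← ofReal_norm, ← ENNReal.ofReal_pow (norm_nonneg _)]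
  rw [← ENNReal.ofReal_sum_of_nonneg fun _ _ => by positivity,
    norm_cfc_sqrt_sum_adjoint_comp_apply_sq]

end Complex

end ContinuousLinearMap

theorem cauchy_schwarz_hilbert_schmidt {H : Type*} [NormedAddCommGroup H]
    [InnerProductSpace ℂ H] [CompleteSpace H]
    {ι : Type*} (e : HilbertBasis ι ℂ H) (N : ℕ) (A B : Fin N → H →L[ℂ] H)
    (X : H →L[ℂ] H) :
    hsNorm e (∑ n, A n ∘L X ∘L B n) ≤
      hsNorm e (cfc Real.sqrt (∑ n, adjoint (A n) ∘L A n) ∘L X) *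
        ENNReal.ofReal (Real.sqrt ‖∑ n, adjoint (B n) ∘L B n‖) := by
  have hsq := tsum_enorm_sum_comp_apply_sq_le e e e Finset.univ (fun n => A n ∘L X) B
  rw [← tsum_enorm_cfc_sqrt_sum_adjoint_comp_comp_apply_sq] at hsq
  have hhalf : (0 : ℝ) ≤ 1 / 2 := by norm_num
  calc hsNorm e (∑ n, A n ∘L X ∘L B n)
      ≤ ((∑' i, ‖(cfc Real.sqrt (∑ n, adjoint (A n) ∘L A n) ∘L X) (e i)‖ₑ ^ 2) *
          ENNReal.ofReal ‖∑ n, adjoint (B n) ∘L B n‖) ^ ((1 : ℝ) / 2) :=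
        ENNReal.rpow_le_rpow hsq hhalf
    _ = _ := by
        rw [ENNReal.mul_rpow_of_nonneg _ _ hhalf,
          ENNReal.ofReal_rpow_of_nonneg (norm_nonneg _) hhalf, ← Real.sqrt_eq_rpow]
        rfl
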